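/- Hedberg's pointwise estimate: let 0 < α < d, 1 ≤ p < d/α, and f ∈ L^p(ℝ^d). Then there is a constant C = C(α, p, d) such that for every x ∈ ℝ^d, |I_α f(x)| ≤ C · (Mf(x))^{1 - αp/d} · ‖f‖_{L^p}^{αp/d}, where Mf is the Hardy–Littlewood maximal function. -/

import Mathlib

open MeasureTheory ENNReal NNReal

/-- The normalizing constant of the Riesz potential:
`γ(α) = π^(d/2) 2^α Γ(α/2) / Γ((d-α)/2)`. -/
noncomputable def rieszGamma (d : ℕ) (α : ℝ) : ℝ :=
  Real.pi ^ ((d : ℝ) / 2) * 2 ^ α * Real.Gamma (α / 2) / Real.Gamma (((d : ℝ) - α) / 2)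

/-- The Riesz potential `I_α f(x) = (1/γ(α)) ∫ f(y) / |x-y|^(d-α) dy`. -/
noncomputable def rieszPotential (d : ℕ) (α : ℝ) (f : EuclideanSpace ℝ (Fin d) → ℝ)
    (x : EuclideanSpace ℝ (Fin d)) : ℝ :=
  (rieszGamma d α)⁻¹ * ∫ y, f y / ‖x - y‖ ^ ((d : ℝ) - α)

/-- The (centered) Hardy–Littlewood maximal function, valued in `ℝ≥0∞`. -/
noncomputable def maximalFn (d : ℕ) (f : EuclideanSpace ℝ (Fin d) → ℝ)
    (x : EuclideanSpace ℝ (Fin d)) : ℝ≥0∞ :=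
  ⨆ r : {r : ℝ // 0 < r},
    (volume (Metric.ball x r.1))⁻¹ * ∫⁻ y in Metric.ball x r.1, ENNReal.ofReal |f y|

/-!
Split the potential at a radius `R`. Inside `B(x, R)` cut into the dyadic annuli
`B(x, 2r) \ B(x, r)`, `r = R 2^(-j-1)`: there the kernel is at most `r^(α-d)` while `|f|` has mass at
most `|B(x, 2r)| Mf(x) ≍ r^d Mf(x)`, so the geometric series sums to `≲ R^α Mf(x)`. Outside,
Hölder's inequality against the kernel, whose `L^p'` norm on `B(x, R)ᶜ` is computed by the same
dyadic decomposition, gives `≲ R^(α - d/p) ‖f‖_p`. The radius `R = (‖f‖_p / Mf(x))^(p/d)` balances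
the two terms.
-/

open Metric Module Filter Topology

section Annuli

variable {X : Type*} [MetricSpace X] {x y : X} {R : ℝ}

lemma exists_zpow_two_mul_le_dist (hR : 0 < R) (hy : y ≠ x) :
    ∃ k : ℤ, R * 2 ^ k ≤ dist y x ∧ dist y x < 2 * (R * 2 ^ k) := by
  obtain ⟨k, hk⟩ := exists_mem_Ico_zpow (div_pos (dist_pos.2 hy) hR) one_lt_two
  rw [Set.mem_Ico, le_div_iff₀ hR, div_lt_iff₀ hR, zpow_add_one₀ two_ne_zero] at hk
  exact ⟨k, by linarith, by linarith⟩

lemma ball_diff_singleton_subset_iUnion_annuli (hR : 0 < R) :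
    ball x R \ {x} ⊆ ⋃ j : ℕ, ball x (2 * (R / 2 ^ (j + 1))) \ ball x (R / 2 ^ (j + 1)) := by
  rintro y ⟨hyR, hyx⟩
  obtain ⟨k, hk, hk'⟩ := exists_zpow_two_mul_le_dist hR hyx
  have hk0 : k < 0 := by
    by_contra! h
    have : (1 : ℝ) ≤ 2 ^ k := one_le_zpow₀ one_le_two h
    exact (mem_ball.1 hyR).not_ge (by nlinarith)
  obtain ⟨j, rfl⟩ := Int.eq_negSucc_of_lt_zero hk0
  rw [zpow_negSucc, ← div_eq_mul_inv] at hk hk'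
  exact Set.mem_iUnion.2 ⟨j, mem_ball.2 hk', fun h => (mem_ball.1 h).not_ge hk⟩

lemma compl_ball_subset_iUnion_annuli (hR : 0 < R) :
    (ball x R)ᶜ ⊆ ⋃ j : ℕ, ball x (2 * (R * 2 ^ j)) \ ball x (R * 2 ^ j) := by
  intro y hy
  have hyR : R ≤ dist y x := not_lt.1 hy
  obtain ⟨k, hk, hk'⟩ := exists_zpow_two_mul_le_dist hR (dist_pos.1 (hR.trans_le hyR))
  have hk0 : 0 ≤ k := by
    by_contra! h
    have : (2 : ℝ) * 2 ^ k ≤ 1 := by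
      rw [← zpow_one_add₀ two_ne_zero]
      exact zpow_le_one_of_nonpos₀ one_le_two (by omega)
    nlinarith
  lift k to ℕ using hk0
  rw [zpow_natCast] at hk hk'
  exact Set.mem_iUnion.2 ⟨k, mem_ball.2 hk', fun h => (mem_ball.1 h).not_ge hk⟩

end Annuli

lemma div_two_pow_rpow {R : ℝ} (hR : 0 ≤ R) (α : ℝ) (j : ℕ) :
    (R / 2 ^ j) ^ α = R ^ α * ((2 : ℝ) ^ (-α)) ^ j := by
  rw [Real.div_rpow hR (by positivity), Real.rpow_neg zero_le_two, inv_pow,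
    Real.rpow_pow_comm zero_le_two, div_eq_mul_inv]

lemma mul_two_pow_rpow {R : ℝ} (hR : 0 ≤ R) (β : ℝ) (j : ℕ) :
    (R * 2 ^ j) ^ β = R ^ β * ((2 : ℝ) ^ β) ^ j := by
  rw [Real.mul_rpow hR (by positivity), Real.rpow_pow_comm zero_le_two]

lemma Real.HolderConjugate.sub_mul_add_mul_one_div {p q : ℝ} (hpq : p.HolderConjugate q)
    (α n : ℝ) : ((α - n) * q + n) * (1 / q) = α - n / p := by
  rw [add_mul, mul_assoc, mul_one_div_cancel hpq.symm.ne_zero, one_div, ← hpq.one_sub_inv]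
  ring

lemma div_rpow_inv_rpow_mul_eq {m n : ℝ} (hm : 0 < m) (hn : 0 < n) {c : ℝ} (hc : c ≠ 0) (a : ℝ) :
    ((n / m) ^ c⁻¹) ^ a * m = m ^ (1 - a / c) * n ^ (a / c) ∧
      ((n / m) ^ c⁻¹) ^ (a - c) * n = m ^ (1 - a / c) * n ^ (a / c) := by
  obtain ⟨u, rfl⟩ : ∃ u, m = Real.exp u := ⟨_, (Real.exp_log hm).symm⟩
  obtain ⟨v, rfl⟩ : ∃ v, n = Real.exp v := ⟨_, (Real.exp_log hn).symm⟩
  simp only [← Real.exp_sub, ← Real.exp_mul, ← Real.exp_add]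
  constructor <;> congr 1 <;> field_simp <;> ring

lemma ENNReal.le_mul_rpow_mul_rpow_of_forall_le {K A B M N : ℝ≥0∞} {a c : ℝ} (ha : 0 < a)
    (hac : a < c) (hA0 : A ≠ 0) (hB : B ≠ ⊤) (hN0 : N ≠ 0) (hN : N ≠ ⊤)
    (h : ∀ R : ℝ, 0 < R →
      K ≤ A * ENNReal.ofReal (R ^ a) * M + B * ENNReal.ofReal (R ^ (a - c)) * N) :
    K ≤ (A + B) * M ^ (1 - a / c) * N ^ (a / c) := by
  have hc : 0 < c := ha.trans hac
  have hθ : 0 < a / c := div_pos ha hc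
  have hθ1 : 0 < 1 - a / c := sub_pos.2 ((div_lt_one hc).2 hac)
  rcases eq_or_ne M ⊤ with rfl | hM
  · rw [top_rpow_of_pos hθ1, mul_top (by simp [hA0]),
      top_mul (rpow_pos (pos_iff_ne_zero.2 hN0) hN).ne']
    exact le_top
  rcases eq_or_ne M 0 with rfl | hM0
  · have hlim : Tendsto (fun R : ℝ => B * ENNReal.ofReal (R ^ (a - c)) * N) atTop (𝓝 0) := by
      have := ENNReal.Tendsto.mul_const (ENNReal.Tendsto.const_mul
        (ENNReal.tendsto_ofReal (tendsto_rpow_neg_atTop (sub_pos.2 hac))) (Or.inr hB)) (Or.inr hN)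
      simpa [neg_sub] using this
    refine (ge_of_tendsto hlim ?_).trans zero_le
    filter_upwards [eventually_gt_atTop 0] with R hR
    simpa using h R hR
  have hm := toReal_pos hM0 hM
  have hn := toReal_pos hN0 hN
  obtain ⟨hmid, hmid'⟩ := div_rpow_inv_rpow_mul_eq hm hn hc.ne' a
  set R := (N.toReal / M.toReal) ^ c⁻¹
  have hR : 0 < R := Real.rpow_pos_of_pos (div_pos hn hm) _
  refine (h R hR).trans_eq ?_
  rw [← ofReal_toReal hM, ← ofReal_toReal hN, mul_assoc, mul_assoc, ← ofReal_mul (by positivity),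
    ← ofReal_mul (by positivity), hmid, hmid', ← add_mul, ofReal_rpow_of_pos hm,
    ofReal_rpow_of_pos hn, ofReal_mul (by positivity), mul_assoc]

section Kernel

variable {E : Type*} [NormedAddCommGroup E] [MeasurableSpace E] (μ : Measure E) {x : E}

lemma setLIntegral_mul_rpow_le_of_subset_compl_ball {g : E → ℝ≥0∞} {a s : ℝ} {S : Set E}
    (hS : MeasurableSet S) (hSa : S ⊆ (ball x a)ᶜ) (ha : 0 < a) (hs : s ≤ 0) :
    ∫⁻ y in S, g y * ENNReal.ofReal (‖x - y‖ ^ s) ∂μ ≤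
      ENNReal.ofReal (a ^ s) * ∫⁻ y in S, g y ∂μ := by
  rw [← lintegral_const_mul' _ _ ofReal_ne_top]
  refine setLIntegral_mono' hS fun y hy => ?_
  have hay : a ≤ ‖x - y‖ := by simpa [dist_eq_norm'] using hSa hy
  rw [mul_comm]
  exact mul_le_mul_left (ofReal_le_ofReal (Real.rpow_le_rpow_of_nonpos ha hay hs)) _

lemma setLIntegral_compl_ball_mul_rpow_le [OpensMeasurableSpace E] (f : E → ℝ) {R s : ℝ}
    (hR : 0 < R) (hs : s ≤ 0) :
    ∫⁻ y in (ball x R)ᶜ, ENNReal.ofReal |f y| * ENNReal.ofReal (‖x - y‖ ^ s) ∂μ ≤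
      ENNReal.ofReal (R ^ s) * eLpNorm f 1 μ := by
  refine (setLIntegral_mul_rpow_le_of_subset_compl_ball μ measurableSet_ball.compl subset_rfl
    hR hs).trans ?_
  simp_rw [eLpNorm_one_eq_lintegral_enorm, Real.enorm_eq_ofReal_abs]
  gcongr
  exact Measure.restrict_le_self

variable [NormedSpace ℝ E] [FiniteDimensional ℝ E] [BorelSpace E] [Nontrivial E]
  [μ.IsAddHaarMeasure]

lemma setLIntegral_annulus_mul_rpow_le {g : E → ℝ≥0∞} {a s : ℝ} {M : ℝ≥0∞}
    (hg : ∀ r, 0 < r → ∫⁻ y in ball x r, g y ∂μ ≤ μ (ball x r) * M) (ha : 0 < a) (hs : s ≤ 0) :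
    ∫⁻ y in ball x (2 * a) \ ball x a, g y * ENNReal.ofReal (‖x - y‖ ^ s) ∂μ ≤
      ENNReal.ofReal (2 ^ finrank ℝ E) * μ (ball 0 1) * ENNReal.ofReal (a ^ (s + finrank ℝ E)) *
        M := by
  have hvol : μ (ball x (2 * a)) =
      ENNReal.ofReal (2 ^ finrank ℝ E) * ENNReal.ofReal (a ^ finrank ℝ E) * μ (ball 0 1) := by
    rw [Measure.addHaar_ball_mul μ x zero_le_two, Measure.addHaar_ball μ 0 ha.le, mul_assoc]
  have hpow : ENNReal.ofReal (a ^ s) * ENNReal.ofReal (a ^ finrank ℝ E) =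
      ENNReal.ofReal (a ^ (s + finrank ℝ E)) := by
    rw [← ofReal_mul (by positivity), Real.rpow_add ha, Real.rpow_natCast]
  calc ∫⁻ y in ball x (2 * a) \ ball x a, g y * ENNReal.ofReal (‖x - y‖ ^ s) ∂μ
      ≤ ENNReal.ofReal (a ^ s) * ∫⁻ y in ball x (2 * a) \ ball x a, g y ∂μ :=
        setLIntegral_mul_rpow_le_of_subset_compl_ball μ
          (measurableSet_ball.diff measurableSet_ball) (Set.sdiff_subset_compl _ _) ha hs
    _ ≤ ENNReal.ofReal (a ^ s) * (μ (ball x (2 * a)) * M) := by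
        gcongr
        exact (lintegral_mono_set Set.sdiff_subset).trans (hg _ (by positivity))
    _ = _ := by rw [hvol, ← hpow]; ring

lemma exists_setLIntegral_ball_mul_rpow_le {α : ℝ} (hα : 0 < α) (hαn : α ≤ finrank ℝ E) :
    ∃ C : ℝ≥0∞, C ≠ ⊤ ∧ 0 < C ∧ ∀ (g : E → ℝ≥0∞) (x : E) (M : ℝ≥0∞),
      (∀ r, 0 < r → ∫⁻ y in ball x r, g y ∂μ ≤ μ (ball x r) * M) → ∀ R, 0 < R →
      ∫⁻ y in ball x R, g y * ENNReal.ofReal (‖x - y‖ ^ (α - finrank ℝ E)) ∂μ ≤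
        C * ENNReal.ofReal (R ^ α) * M := by
  set K := ENNReal.ofReal (2 ^ finrank ℝ E) * μ (ball 0 1)
  set ρ := ENNReal.ofReal ((2 : ℝ) ^ (-α))
  have hρ : ρ < 1 := ofReal_lt_one.2 (Real.rpow_lt_one_of_one_lt_of_neg one_lt_two (by linarith))
  have hK : K ≠ ⊤ := mul_ne_top ofReal_ne_top measure_ball_lt_top.ne
  refine ⟨K * (ρ * (1 - ρ)⁻¹), mul_ne_top hK (mul_ne_top ofReal_ne_top
    (inv_ne_top.2 (tsub_pos_of_lt hρ).ne')), ?_, fun g x M hg R hR => ?_⟩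
  · have hρ0 : ρ ≠ 0 := (ofReal_pos.2 (by positivity)).ne'
    have hK0 : K ≠ 0 :=
      mul_ne_zero (ofReal_pos.2 (by positivity)).ne' (measure_ball_pos μ 0 one_pos).ne'
    exact ENNReal.mul_pos hK0 (mul_ne_zero hρ0 (ENNReal.inv_ne_zero.2 (sub_ne_top one_ne_top)))
  have hterm : ∀ j : ℕ, ∫⁻ y in ball x (2 * (R / 2 ^ (j + 1))) \ ball x (R / 2 ^ (j + 1)),
      g y * ENNReal.ofReal (‖x - y‖ ^ (α - finrank ℝ E)) ∂μ ≤
        K * ENNReal.ofReal (R ^ α) * M * ρ ^ (j + 1) := by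
    intro j
    refine (setLIntegral_annulus_mul_rpow_le μ hg (by positivity) (by linarith)).trans_eq ?_
    have hR' : ENNReal.ofReal ((R / 2 ^ (j + 1)) ^ α) =
        ENNReal.ofReal (R ^ α) * ρ ^ (j + 1) := by
      rw [div_two_pow_rpow hR.le, ofReal_mul (by positivity), ofReal_pow (by positivity)]
    rw [sub_add_cancel, hR']
    ring
  calc ∫⁻ y in ball x R, g y * ENNReal.ofReal (‖x - y‖ ^ (α - finrank ℝ E)) ∂μ
      = ∫⁻ y in ball x R \ {x}, g y * ENNReal.ofReal (‖x - y‖ ^ (α - finrank ℝ E)) ∂μ :=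
        setLIntegral_congr (sdiff_null_ae_eq_self (measure_singleton x)).symm
    _ ≤ ∫⁻ y in ⋃ j : ℕ, ball x (2 * (R / 2 ^ (j + 1))) \ ball x (R / 2 ^ (j + 1)),
          g y * ENNReal.ofReal (‖x - y‖ ^ (α - finrank ℝ E)) ∂μ :=
        lintegral_mono_set (ball_diff_singleton_subset_iUnion_annuli hR)
    _ ≤ ∑' j : ℕ, ∫⁻ y in ball x (2 * (R / 2 ^ (j + 1))) \ ball x (R / 2 ^ (j + 1)),
          g y * ENNReal.ofReal (‖x - y‖ ^ (α - finrank ℝ E)) ∂μ := lintegral_iUnion_le _ _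
    _ ≤ ∑' j : ℕ, K * ENNReal.ofReal (R ^ α) * M * ρ ^ (j + 1) := ENNReal.tsum_le_tsum hterm
    _ = K * (ρ * (1 - ρ)⁻¹) * ENNReal.ofReal (R ^ α) * M := by
        rw [ENNReal.tsum_mul_left, ENNReal.tsum_geometric_add_one]; ring

lemma exists_setLIntegral_compl_ball_rpow_le {s : ℝ} (hs : s + finrank ℝ E < 0) :
    ∃ C : ℝ≥0∞, C ≠ ⊤ ∧ ∀ (x : E) (R : ℝ), 0 < R →
      ∫⁻ y in (ball x R)ᶜ, ENNReal.ofReal (‖x - y‖ ^ s) ∂μ ≤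
        C * ENNReal.ofReal (R ^ (s + finrank ℝ E)) := by
  set K := ENNReal.ofReal (2 ^ finrank ℝ E) * μ (ball 0 1)
  set ρ := ENNReal.ofReal ((2 : ℝ) ^ (s + finrank ℝ E))
  have hρ : ρ < 1 := ofReal_lt_one.2 (Real.rpow_lt_one_of_one_lt_of_neg one_lt_two hs)
  refine ⟨K * (1 - ρ)⁻¹, mul_ne_top (mul_ne_top ofReal_ne_top measure_ball_lt_top.ne)
    (inv_ne_top.2 (tsub_pos_of_lt hρ).ne'), fun x R hR => ?_⟩
  have hterm : ∀ j : ℕ, ∫⁻ y in ball x (2 * (R * 2 ^ j)) \ ball x (R * 2 ^ j),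
      ENNReal.ofReal (‖x - y‖ ^ s) ∂μ ≤ K * ENNReal.ofReal (R ^ (s + finrank ℝ E)) * ρ ^ j := by
    intro j
    have := setLIntegral_annulus_mul_rpow_le μ (g := fun _ => 1) (M := 1) (x := x)
      (a := R * 2 ^ j) (s := s) (fun r _ => by simp) (by positivity)
      (by linarith [(Nat.cast_nonneg _ : (0 : ℝ) ≤ finrank ℝ E)])
    simp only [one_mul, mul_one] at this
    have hR' : ENNReal.ofReal ((R * 2 ^ j) ^ (s + finrank ℝ E)) =
        ENNReal.ofReal (R ^ (s + finrank ℝ E)) * ρ ^ j := by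
      rw [mul_two_pow_rpow hR.le, ofReal_mul (by positivity), ofReal_pow (by positivity)]
    rw [hR'] at this
    exact this.trans_eq (by ring)
  calc ∫⁻ y in (ball x R)ᶜ, ENNReal.ofReal (‖x - y‖ ^ s) ∂μ
      ≤ ∫⁻ y in ⋃ j : ℕ, ball x (2 * (R * 2 ^ j)) \ ball x (R * 2 ^ j),
          ENNReal.ofReal (‖x - y‖ ^ s) ∂μ :=
        lintegral_mono_set (compl_ball_subset_iUnion_annuli hR)
    _ ≤ ∑' j : ℕ, ∫⁻ y in ball x (2 * (R * 2 ^ j)) \ ball x (R * 2 ^ j),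
          ENNReal.ofReal (‖x - y‖ ^ s) ∂μ := lintegral_iUnion_le _ _
    _ ≤ ∑' j : ℕ, K * ENNReal.ofReal (R ^ (s + finrank ℝ E)) * ρ ^ j := ENNReal.tsum_le_tsum hterm
    _ = K * (1 - ρ)⁻¹ * ENNReal.ofReal (R ^ (s + finrank ℝ E)) := by
        rw [ENNReal.tsum_mul_left, ENNReal.tsum_geometric]; ring

lemma exists_setLIntegral_compl_ball_mul_rpow_le_of_one_lt {α p : ℝ} (hp : 1 < p)
    (hαp : α * p < finrank ℝ E) :
    ∃ C : ℝ≥0∞, C ≠ ⊤ ∧ ∀ f : E → ℝ, AEStronglyMeasurable f μ → ∀ (x : E) (R : ℝ), 0 < R →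
      ∫⁻ y in (ball x R)ᶜ, ENNReal.ofReal |f y| * ENNReal.ofReal (‖x - y‖ ^ (α - finrank ℝ E)) ∂μ ≤
        C * ENNReal.ofReal (R ^ (α - finrank ℝ E / p)) * eLpNorm f (ENNReal.ofReal p) μ := by
  have hp0 : 0 < p := zero_lt_one.trans hp
  have hpq : p.HolderConjugate p.conjExponent := .conjExponent hp
  set q := p.conjExponent
  have hq : 0 ≤ 1 / q := one_div_nonneg.2 hpq.symm.nonneg
  set s := (α - finrank ℝ E) * q
  have he : (s + finrank ℝ E) * (1 / q) = α - finrank ℝ E / p :=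
    hpq.sub_mul_add_mul_one_div _ _
  have hs : s + finrank ℝ E < 0 := by
    refine neg_of_mul_neg_left ?_ hq
    rw [he, sub_neg, lt_div_iff₀ hp0]
    exact hαp
  obtain ⟨D, hD, hker⟩ := exists_setLIntegral_compl_ball_rpow_le μ hs
  refine ⟨D ^ (1 / q), rpow_ne_top_of_nonneg hq hD, fun f hf x R hR => ?_⟩
  have hf_norm : (∫⁻ y in (ball x R)ᶜ, ENNReal.ofReal |f y| ^ p ∂μ) ^ (1 / p) ≤
      eLpNorm f (ENNReal.ofReal p) μ := by
    simp_rw [eLpNorm_eq_lintegral_rpow_enorm_toReal (by simpa using hp0) ofReal_ne_top,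
      toReal_ofReal hp0.le, Real.enorm_eq_ofReal_abs]
    exact rpow_le_rpow (setLIntegral_le_lintegral _ _) (by positivity)
  have hker_norm :
      (∫⁻ y in (ball x R)ᶜ, ENNReal.ofReal (‖x - y‖ ^ (α - finrank ℝ E)) ^ q ∂μ) ^ (1 / q) ≤
        D ^ (1 / q) * ENNReal.ofReal (R ^ (α - finrank ℝ E / p)) := by
    simp_rw [ofReal_rpow_of_nonneg (Real.rpow_nonneg (norm_nonneg _) _) hpq.symm.nonneg,
      ← Real.rpow_mul (norm_nonneg _)]
    refine (rpow_le_rpow (hker x R hR) hq).trans_eq ?_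
    rw [mul_rpow_of_nonneg _ _ hq, ofReal_rpow_of_pos (by positivity), ← Real.rpow_mul hR.le, he]
  calc ∫⁻ y in (ball x R)ᶜ, ENNReal.ofReal |f y| * ENNReal.ofReal (‖x - y‖ ^ (α - finrank ℝ E)) ∂μ
      ≤ (∫⁻ y in (ball x R)ᶜ, ENNReal.ofReal |f y| ^ p ∂μ) ^ (1 / p) *
          (∫⁻ y in (ball x R)ᶜ, ENNReal.ofReal (‖x - y‖ ^ (α - finrank ℝ E)) ^ q ∂μ) ^ (1 / q) :=
        ENNReal.lintegral_mul_le_Lp_mul_Lq _ hpq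
          (ENNReal.measurable_ofReal.comp_aemeasurable hf.aemeasurable.abs).restrict (by fun_prop)
    _ ≤ eLpNorm f (ENNReal.ofReal p) μ *
          (D ^ (1 / q) * ENNReal.ofReal (R ^ (α - finrank ℝ E / p))) :=
        mul_le_mul' hf_norm hker_norm
    _ = _ := by ring

lemma exists_setLIntegral_compl_ball_mul_rpow_le {α p : ℝ} (hp : 1 ≤ p)
    (hαp : α * p < finrank ℝ E) :
    ∃ C : ℝ≥0∞, C ≠ ⊤ ∧ ∀ f : E → ℝ, AEStronglyMeasurable f μ → ∀ (x : E) (R : ℝ), 0 < R →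
      ∫⁻ y in (ball x R)ᶜ, ENNReal.ofReal |f y| * ENNReal.ofReal (‖x - y‖ ^ (α - finrank ℝ E)) ∂μ ≤
        C * ENNReal.ofReal (R ^ (α - finrank ℝ E / p)) * eLpNorm f (ENNReal.ofReal p) μ := by
  rcases hp.eq_or_lt with rfl | hp
  · refine ⟨1, one_ne_top, fun f _ x R hR => ?_⟩
    rw [one_mul, div_one, ofReal_one]
    exact setLIntegral_compl_ball_mul_rpow_le μ f hR (by linarith)
  · exact exists_setLIntegral_compl_ball_mul_rpow_le_of_one_lt μ hp hαp

end Kernel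

lemma rieszGamma_pos {d : ℕ} {α : ℝ} (hα : 0 < α) (hαd : α < d) : 0 < rieszGamma d α := by
  have h1 : 0 < Real.Gamma (α / 2) := Real.Gamma_pos_of_pos (by linarith)
  have h2 : 0 < Real.Gamma ((d - α) / 2) := Real.Gamma_pos_of_pos (by linarith)
  unfold rieszGamma
  positivity

section Euclidean

variable {d : ℕ} {α : ℝ} (f : EuclideanSpace ℝ (Fin d) → ℝ) (x : EuclideanSpace ℝ (Fin d))

lemma ofReal_abs_rieszPotential_le :
    ENNReal.ofReal |rieszPotential d α f x| ≤ ENNReal.ofReal |(rieszGamma d α)⁻¹| *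
      ∫⁻ y, ENNReal.ofReal |f y| * ENNReal.ofReal (‖x - y‖ ^ (α - d)) := by
  rw [rieszPotential, abs_mul, ofReal_mul (abs_nonneg _)]
  gcongr
  rw [← Real.enorm_eq_ofReal_abs]
  refine (enorm_integral_le_lintegral_enorm _).trans_eq (lintegral_congr fun y => ?_)
  rw [Real.enorm_eq_ofReal_abs, abs_div, abs_of_nonneg (Real.rpow_nonneg (norm_nonneg (x - y)) _),
    div_eq_mul_inv, ← Real.rpow_neg (norm_nonneg _), neg_sub, ofReal_mul (abs_nonneg _)]

lemma rieszPotential_eq_zero_of_ae_eq_zero (hf : f =ᵐ[volume] 0) :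
    rieszPotential d α f x = 0 := by
  rw [rieszPotential, integral_eq_zero_of_ae (hf.mono fun y hy => by simp [hy]), mul_zero]

lemma lintegral_ball_le_volume_mul_maximalFn {r : ℝ} (hr : 0 < r) :
    ∫⁻ y in ball x r, ENNReal.ofReal |f y| ≤ volume (ball x r) * maximalFn d f x :=
  (ENNReal.inv_mul_le_iff (measure_ball_pos volume x hr).ne' measure_ball_lt_top.ne).1
    (le_iSup_of_le (⟨r, hr⟩ : {r : ℝ // 0 < r}) le_rfl)

end Euclidean

theorem hedberg_pointwise_general (d : ℕ) (α p : ℝ)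
    (hα : 0 < α) (hαd : α < d) (hp : 1 ≤ p) (hpd : p < (d : ℝ) / α) :
    ∃ C : ℝ≥0∞, C ≠ ⊤ ∧ 0 < C ∧
      ∀ f : EuclideanSpace ℝ (Fin d) → ℝ, MemLp f (ENNReal.ofReal p) volume →
        ∀ x, ENNReal.ofReal |rieszPotential d α f x|
          ≤ C * (maximalFn d f x) ^ (1 - α * p / d) *
              (eLpNorm f (ENNReal.ofReal p) volume) ^ (α * p / d) := by
  have : Nonempty (Fin d) := ⟨⟨0, by exact_mod_cast hα.trans hαd⟩⟩
  have hαp : α * p < d := by rwa [lt_div_iff₀' hα] at hpd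
  obtain ⟨Cn, hCn, hCn0, hnear⟩ := exists_setLIntegral_ball_mul_rpow_le
    (volume : Measure (EuclideanSpace ℝ (Fin d))) hα (by simpa using hαd.le)
  obtain ⟨Cf, hCf, hfar⟩ := exists_setLIntegral_compl_ball_mul_rpow_le
    (volume : Measure (EuclideanSpace ℝ (Fin d))) hp (by simpa using hαp)
  simp only [finrank_euclideanSpace_fin] at hnear hfar
  refine ⟨ENNReal.ofReal |(rieszGamma d α)⁻¹| * (Cn + Cf),
    mul_ne_top ofReal_ne_top (add_ne_top.2 ⟨hCn, hCf⟩),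
    ENNReal.mul_pos (by simp [(rieszGamma_pos hα hαd).ne']) (by simp [hCn0.ne']), fun f hf x => ?_⟩
  rcases eq_or_ne (eLpNorm f (ENNReal.ofReal p) volume) 0 with hN | hN
  · rw [rieszPotential_eq_zero_of_ae_eq_zero f x
      ((eLpNorm_eq_zero_iff hf.1 (by simp; linarith)).1 hN)]
    simp
  refine (ofReal_abs_rieszPotential_le f x).trans ?_
  rw [mul_assoc, mul_assoc, ← div_div_eq_mul_div, ← mul_assoc (Cn + Cf)]
  gcongr
  refine ENNReal.le_mul_rpow_mul_rpow_of_forall_le hα ?_ hCn0.ne' hCf hN hf.eLpNorm_ne_top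
    fun R hR => ?_
  · rw [lt_div_iff₀ (by linarith)]
    linarith
  rw [← lintegral_add_compl _ (measurableSet_ball (x := x) (ε := R))]
  exact add_le_add (hnear _ x _ (fun r hr => lintegral_ball_le_volume_mul_maximalFn f x hr) R hR)
    (hfar f hf.1 x R hR)

/-- Hedberg's pointwise estimate:
`|I_α f(x)| ≤ C (Mf(x))^(1-αp/d) ‖f‖_{L^p}^(αp/d)`. -/
theorem hedberg_pointwise (d : ℕ) (hd : 1 ≤ d) (α p : ℝ)
    (hα : 0 < α) (hαd : α < d) (hp : 1 ≤ p) (hpd : p < (d : ℝ) / α) :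
    ∃ C : ℝ≥0∞, C ≠ ⊤ ∧ 0 < C ∧
      ∀ f : EuclideanSpace ℝ (Fin d) → ℝ, MemLp f (ENNReal.ofReal p) volume →
        ∀ x, ENNReal.ofReal |rieszPotential d α f x|
          ≤ C * (maximalFn d f x) ^ (1 - α * p / d) *
              (eLpNorm f (ENNReal.ofReal p) volume) ^ (α * p / d) :=
  hedberg_pointwise_general d α p hα hαd hp hpd
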